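/- An ideal I ⊆ ℝ[x₁,…,xₙ] is TH-exact if and only if its real radical √ᴿI is TH-exact. -/

import Mathlib

open MvPolynomial

/-- A polynomial `h` is `k`-sos mod a set `I` of polynomials if
`h - ∑ gᵢ² ∈ I` for some polynomials `gᵢ` of degree at most `k`. -/
def IsKSos {σ : Type*} (I : Set (MvPolynomial σ ℝ)) (k : ℕ) (h : MvPolynomial σ ℝ) : Prop :=
  ∃ (r : ℕ) (g : Fin r → MvPolynomial σ ℝ),
    (∀ i, (g i).totalDegree ≤ k) ∧ h - ∑ i, g i ^ 2 ∈ I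

/-- The `k`-th theta body of `I`: the points where every linear polynomial that is
`k`-sos mod `I` is nonnegative. -/
def thetaBody {σ : Type*} (I : Set (MvPolynomial σ ℝ)) (k : ℕ) : Set (σ → ℝ) :=
  {p | ∀ l : MvPolynomial σ ℝ, l.totalDegree ≤ 1 → IsKSos I k l → 0 ≤ eval p l}

/-- The real variety of a set of polynomials. -/
def realVariety {σ : Type*} (I : Set (MvPolynomial σ ℝ)) : Set (σ → ℝ) :=
  {x | ∀ f ∈ I, eval x f = 0}

/-- The real radical of a set of polynomials:
all `f` with `f^(2m) + ∑ gᵢ² ∈ I` for some `m` and some `gᵢ`. -/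
def realRadical {σ : Type*} (I : Set (MvPolynomial σ ℝ)) : Set (MvPolynomial σ ℝ) :=
  {f | ∃ (m r : ℕ) (g : Fin r → MvPolynomial σ ℝ), f ^ (2 * m) + ∑ i, g i ^ 2 ∈ I}

/-- A set of polynomials is `TH_k`-exact if its `k`-th theta body equals the closure of the
convex hull of its real variety, and TH-exact if it is `TH_k`-exact for some `k`. -/
def IsThExact {σ : Type*} (I : Set (MvPolynomial σ ℝ)) : Prop :=
  ∃ k : ℕ, thetaBody I k = closure (convexHull ℝ (realVariety I))


/-!
Since `I ⊆ √ᴿI` and both have the same real variety, `TH_k(√ᴿI) ⊆ TH_k(I)`, while every theta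
body contains the closed convex hull of the variety; this gives one direction.

Conversely, if `l` is `k`-sos modulo `√ᴿI`, then `l = σ + f` with `σ` a sum of squares and
`f ∈ √ᴿI` of degree at most `2k + 1`, so `f ^ (2m) + τ ∈ I` for a sum of squares `τ`.
Completing squares repeatedly shows that, for every `ε > 0`, `ε + f + K f ^ (2 · 2 ^ r)` is a sum
of squares of degree `2 ^ r deg f` for some `K > 0`; hence `l + ε` is sos modulo `I` with a degree
bound independent of `ε`. A finite basis of the degree-`≤ 2k + 1` part of `√ᴿI` makes the bound
independent of `l` as well. So there is a `J` such that `l(p) + ε ≥ 0` for all `p ∈ TH_J(I)` and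
all `ε > 0`, i.e. `TH_J(I) ⊆ TH_k(√ᴿI)`.
-/

variable {σ : Type*}

def IsKSumSq (k : ℕ) (h : MvPolynomial σ ℝ) : Prop :=
  ∃ (r : ℕ) (g : Fin r → MvPolynomial σ ℝ), (∀ i, (g i).totalDegree ≤ k) ∧ h = ∑ i, g i ^ 2

namespace IsKSumSq

variable {k k' : ℕ} {h h' q : MvPolynomial σ ℝ}

lemma sq (hq : q.totalDegree ≤ k) : IsKSumSq k (q ^ 2) :=
  ⟨1, ![q], by simpa using hq, by simp⟩

lemma mono (hkk' : k ≤ k') (hh : IsKSumSq k h) : IsKSumSq k' h := by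
  obtain ⟨r, g, hg, rfl⟩ := hh
  exact ⟨r, g, fun i => (hg i).trans hkk', rfl⟩

lemma add (hh : IsKSumSq k h) (hh' : IsKSumSq k h') : IsKSumSq k (h + h') := by
  obtain ⟨r, g, hg, rfl⟩ := hh
  obtain ⟨r', g', hg', rfl⟩ := hh'
  refine ⟨r + r', Fin.append g g', Fin.addCases (by simpa using hg) (by simpa using hg'), ?_⟩
  simp [Fin.sum_univ_add]

lemma smul {c : ℝ} (hc : 0 ≤ c) (hh : IsKSumSq k h) : IsKSumSq k (c • h) := by
  obtain ⟨r, g, hg, rfl⟩ := hh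
  refine ⟨r, fun i => √c • g i, fun i => (totalDegree_smul_le _ _).trans (hg i), ?_⟩
  simp [Finset.smul_sum, smul_pow, Real.sq_sqrt hc]

lemma sq_mul {e : ℕ} (hh : IsKSumSq k h) (hq : q.totalDegree ≤ e) :
    IsKSumSq (e + k) (q ^ 2 * h) := by
  obtain ⟨r, g, hg, rfl⟩ := hh
  refine ⟨r, fun i => q * g i, fun i => (totalDegree_mul _ _).trans (add_le_add hq (hg i)), ?_⟩
  simp [Finset.mul_sum, mul_pow]

lemma totalDegree_le (hh : IsKSumSq k h) : h.totalDegree ≤ 2 * k := by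
  obtain ⟨r, g, hg, rfl⟩ := hh
  refine totalDegree_finsetSum_le fun i _ => (totalDegree_pow _ _).trans ?_
  exact Nat.mul_le_mul_left _ (hg i)

lemma sum_sq {r : ℕ} (g : Fin r → MvPolynomial σ ℝ) :
    IsKSumSq (Finset.univ.sup fun i => (g i).totalDegree) (∑ i, g i ^ 2) :=
  ⟨r, g, fun i => Finset.le_sup (f := fun i => (g i).totalDegree) (Finset.mem_univ i), rfl⟩

end IsKSumSq

lemma isKSos_iff {I : Set (MvPolynomial σ ℝ)} {k : ℕ} {h : MvPolynomial σ ℝ} :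
    IsKSos I k h ↔ ∃ s, IsKSumSq k s ∧ h - s ∈ I := by
  constructor
  · rintro ⟨r, g, hg, hmem⟩
    exact ⟨_, ⟨r, g, hg, rfl⟩, hmem⟩
  · rintro ⟨s, ⟨r, g, hg, rfl⟩, hmem⟩
    exact ⟨r, g, hg, hmem⟩

lemma Finsupp.eq_zero_or_eq_single_one_of_sum_le_one {s : σ →₀ ℕ} (hs : (s.sum fun _ e => e) ≤ 1) :
    s = 0 ∨ ∃ i, s = Finsupp.single i 1 := by
  classical
  have hcard : Multiset.card (Finsupp.toMultiset s) ≤ 1 := by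
    rw [Finsupp.card_toMultiset]; exact hs
  rw [← Finsupp.toMultiset_toFinsupp s]
  rcases Nat.le_one_iff_eq_zero_or_eq_one.mp hcard with h | h
  · exact Or.inl (by rw [Multiset.card_eq_zero.mp h, Multiset.toFinsupp_zero])
  · obtain ⟨i, hi⟩ := Multiset.card_eq_one.mp h
    exact Or.inr ⟨i, by rw [hi, Multiset.toFinsupp_singleton]⟩

lemma eval_smul_add_smul_of_totalDegree_le_one {l : MvPolynomial σ ℝ} (hl : l.totalDegree ≤ 1)
    (x y : σ → ℝ) {a b : ℝ} (hab : a + b = 1) :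
    eval (a • x + b • y) l = a * eval x l + b * eval y l := by
  simp only [eval_eq, Finset.mul_sum, ← Finset.sum_add_distrib]
  refine Finset.sum_congr rfl fun s hs => ?_
  rcases Finsupp.eq_zero_or_eq_single_one_of_sum_le_one ((le_totalDegree hs).trans hl) with
    rfl | ⟨i, rfl⟩
  · simp only [Finsupp.support_zero, Finset.prod_empty]
    linear_combination -coeff 0 l * hab
  · simp only [Finsupp.support_single _ one_ne_zero, Finset.prod_singleton,
      Finsupp.single_eq_same, Pi.add_apply, Pi.smul_apply, smul_eq_mul, pow_one]
    ring

lemma convex_thetaBody (S : Set (MvPolynomial σ ℝ)) (k : ℕ) : Convex ℝ (thetaBody S k) := by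
  intro x hx y hy a b ha hb hab l hl hsos
  rw [eval_smul_add_smul_of_totalDegree_le_one hl x y hab]
  exact add_nonneg (mul_nonneg ha (hx l hl hsos)) (mul_nonneg hb (hy l hl hsos))

lemma isClosed_thetaBody (S : Set (MvPolynomial σ ℝ)) (k : ℕ) : IsClosed (thetaBody S k) := by
  simp only [thetaBody, Set.ofPred_forall]
  exact isClosed_iInter fun l => isClosed_iInter fun _ => isClosed_iInter fun _ =>
    isClosed_le continuous_const (continuous_eval l)

lemma realVariety_subset_thetaBody (S : Set (MvPolynomial σ ℝ)) (k : ℕ) :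
    realVariety S ⊆ thetaBody S k := by
  rintro x hx l - ⟨r, g, -, hmem⟩
  rw [← sub_add_cancel l (∑ i, g i ^ 2), map_add, hx _ hmem, zero_add, map_sum]
  exact Finset.sum_nonneg fun i _ => by rw [map_pow]; positivity

lemma closure_convexHull_realVariety_subset_thetaBody (S : Set (MvPolynomial σ ℝ)) (k : ℕ) :
    closure (convexHull ℝ (realVariety S)) ⊆ thetaBody S k :=
  closure_minimal (convexHull_min (realVariety_subset_thetaBody S k) (convex_thetaBody S k))
    (isClosed_thetaBody S k)

lemma thetaBody_anti {S T : Set (MvPolynomial σ ℝ)} (hST : S ⊆ T) (k : ℕ) :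
    thetaBody T k ⊆ thetaBody S k := by
  rintro p hp l hl ⟨r, g, hg, hmem⟩
  exact hp l hl ⟨r, g, hg, hST hmem⟩

lemma subset_realRadical (I : Ideal (MvPolynomial σ ℝ)) :
    (I : Set (MvPolynomial σ ℝ)) ⊆ realRadical I := by
  intro f hf
  exact ⟨1, 0, ![], by simpa [pow_two] using I.mul_mem_left f hf⟩

lemma realVariety_realRadical (I : Ideal (MvPolynomial σ ℝ)) :
    realVariety (realRadical (I : Set (MvPolynomial σ ℝ))) = realVariety I := by
  refine subset_antisymm (fun x hx f hf => hx f (subset_realRadical I hf)) ?_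
  rintro x hx f ⟨m, r, g, hmem⟩
  have h0 := hx _ hmem
  simp only [map_add, map_pow, map_sum] at h0
  have hsq : 0 ≤ ∑ i, eval x (g i) ^ 2 := Finset.sum_nonneg fun i _ => sq_nonneg _
  have hpow : 0 ≤ eval x f ^ (2 * m) := (even_two_mul m).pow_nonneg _
  exact eq_zero_of_pow_eq_zero (n := 2 * m) (by linarith)

section Certificates

variable {I : Ideal (MvPolynomial σ ℝ)} {k k' : ℕ} {h h' : MvPolynomial σ ℝ}

lemma IsKSumSq.isKSos (hh : IsKSumSq k h) : IsKSos (I : Set (MvPolynomial σ ℝ)) k h :=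
  isKSos_iff.mpr ⟨h, hh, by simp⟩

lemma IsKSos.mono (hkk' : k ≤ k') (hh : IsKSos (I : Set (MvPolynomial σ ℝ)) k h) :
    IsKSos (I : Set (MvPolynomial σ ℝ)) k' h := by
  obtain ⟨s, hs, hmem⟩ := isKSos_iff.mp hh
  exact isKSos_iff.mpr ⟨s, hs.mono hkk', hmem⟩

lemma IsKSos.add (hh : IsKSos (I : Set (MvPolynomial σ ℝ)) k h)
    (hh' : IsKSos (I : Set (MvPolynomial σ ℝ)) k h') :
    IsKSos (I : Set (MvPolynomial σ ℝ)) k (h + h') := by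
  obtain ⟨s, hs, hmem⟩ := isKSos_iff.mp hh
  obtain ⟨s', hs', hmem'⟩ := isKSos_iff.mp hh'
  refine isKSos_iff.mpr ⟨s + s', hs.add hs', ?_⟩
  rw [show h + h' - (s + s') = (h - s) + (h' - s') by ring]
  exact I.add_mem hmem hmem'

end Certificates

lemma exists_isKSumSq_C_add_add_smul_pow (r : ℕ) {f : MvPolynomial σ ℝ} {d : ℕ}
    (hf : f.totalDegree ≤ d) {ε : ℝ} (hε : 0 < ε) :
    ∃ K : ℝ, 0 < K ∧ IsKSumSq (2 ^ r * d) (C ε + f + K • f ^ (2 * 2 ^ r)) := by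
  induction r generalizing ε with
  | zero =>
    refine ⟨1 / (4 * ε), by positivity, ?_⟩
    rw [pow_zero, one_mul, mul_one]
    have hdeg : (f + C (2 * ε)).totalDegree ≤ d :=
      (totalDegree_add _ _).trans (max_le hf (by rw [totalDegree_C]; exact d.zero_le))
    -- `ε + f + f ^ 2 / (4ε) = (f + 2ε) ^ 2 / (4ε)`
    convert ((IsKSumSq.sq hdeg).smul (c := 1 / (4 * ε)) (by positivity)) using 1
    have e1 : C (1 / (4 * ε)) * C (2 * ε) * 2 = (1 : MvPolynomial σ ℝ) := by
      rw [← map_mul, ← map_ofNat C 2, ← map_mul, ← map_one C]; congr 1; field_simp; norm_num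
    have e2 : C (1 / (4 * ε)) * C (2 * ε) ^ 2 = (C ε : MvPolynomial σ ℝ) := by
      rw [← map_pow, ← map_mul]; congr 1; field_simp; ring
    simp only [smul_eq_C_mul]
    linear_combination (-f) * e1 - e2
  | succ r ih =>
    obtain ⟨K, hK, hS⟩ := ih (half_pos hε)
    refine ⟨K ^ 2 / (2 * ε), by positivity, ?_⟩
    set F := f ^ (2 * 2 ^ r)
    have hdeg : (F - C (ε / K)).totalDegree ≤ 2 ^ (r + 1) * d := by
      refine (totalDegree_sub _ _).trans (max_le ((totalDegree_pow _ _).trans ?_) (by simp))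
      rw [pow_succ, mul_comm _ 2]
      exact Nat.mul_le_mul_left _ hf
    -- `ε + f + K² F² / (2ε) = (ε / 2 + f + K F) + K² (F - ε / K) ^ 2 / (2ε)`
    convert (hS.mono (Nat.mul_le_mul_right d (Nat.pow_le_pow_right two_pos r.le_succ))).add
      ((IsKSumSq.sq hdeg).smul (c := K ^ 2 / (2 * ε)) (by positivity)) using 1
    have e1 : C (K ^ 2 / (2 * ε)) * C (ε / K) * 2 = (C K : MvPolynomial σ ℝ) := by
      rw [← map_mul, ← map_ofNat C 2, ← map_mul]; congr 1; field_simp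
    have e2 : C (K ^ 2 / (2 * ε)) * C (ε / K) ^ 2 = (C (ε / 2) : MvPolynomial σ ℝ) := by
      rw [← map_pow, ← map_mul]; congr 1; field_simp
    have e3 : (C ε : MvPolynomial σ ℝ) = C (ε / 2) * 2 := by
      rw [← map_ofNat C 2, ← map_mul]; congr 1; ring
    have hF : f ^ (2 * 2 ^ (r + 1)) = F ^ 2 := by rw [← pow_mul]; ring_nf
    simp only [smul_eq_C_mul, hF]
    linear_combination e3 + F * e1 - e2

section RealRadical

variable {I : Ideal (MvPolynomial σ ℝ)}

lemma isKSos_C_add_of_pow_add_mem {f τ : MvPolynomial σ ℝ} {d D m : ℕ} (hf : f.totalDegree ≤ d)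
    (hτ : IsKSumSq D τ) (hmem : f ^ (2 * m) + τ ∈ I) {ε : ℝ} (hε : 0 < ε) :
    IsKSos (I : Set (MvPolynomial σ ℝ)) (2 ^ m * d + D) (C ε + f) := by
  obtain ⟨K, hK, hS⟩ := exists_isKSumSq_C_add_add_smul_pow m hf hε
  have hm : m ≤ 2 ^ m := Nat.lt_two_pow_self.le
  set q := f ^ (2 ^ m - m)
  have hq : q.totalDegree ≤ 2 ^ m * d :=
    (totalDegree_pow _ _).trans (Nat.mul_le_mul (Nat.sub_le _ _) hf)
  have hraised : f ^ (2 * 2 ^ m) + q ^ 2 * τ ∈ I := by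
    rw [show f ^ (2 * 2 ^ m) + q ^ 2 * τ = q ^ 2 * (f ^ (2 * m) + τ) by
      rw [mul_add, ← pow_mul, ← pow_add]; congr 2; omega]
    exact I.mul_mem_left _ hmem
  refine isKSos_iff.mpr ⟨_, (hS.mono (Nat.le_add_right _ _)).add ((hτ.sq_mul hq).smul hK.le), ?_⟩
  rw [show C ε + f - (C ε + f + K • f ^ (2 * 2 ^ m) + K • (q ^ 2 * τ))
      = -(K • (f ^ (2 * 2 ^ m) + q ^ 2 * τ)) by rw [smul_add]; ring]
  exact I.neg_mem (Submodule.smul_of_tower_mem I K hraised)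

lemma exists_forall_isKSos_C_add_smul {v : MvPolynomial σ ℝ} {d : ℕ}
    (hv : v ∈ realRadical (I : Set (MvPolynomial σ ℝ))) (hvd : v.totalDegree ≤ d) :
    ∃ D, ∀ c ε : ℝ, 0 < ε → IsKSos (I : Set (MvPolynomial σ ℝ)) D (C ε + c • v) := by
  obtain ⟨m, r, g, hmem⟩ := hv
  refine ⟨_, fun c ε hε => isKSos_C_add_of_pow_add_mem (m := m)
    ((totalDegree_smul_le c v).trans hvd)
    ((IsKSumSq.sum_sq g).smul ((even_two_mul m).pow_nonneg c)) ?_ hε⟩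
  rw [smul_pow, ← smul_add]
  exact Submodule.smul_of_tower_mem I _ hmem

lemma isKSos_C_add_sum {ι : Type*} {D : ℕ} (T : Finset ι) {v : ι → MvPolynomial σ ℝ}
    (hv : ∀ t ∈ T, ∀ c ε : ℝ, 0 < ε → IsKSos (I : Set (MvPolynomial σ ℝ)) D (C ε + c • v t))
    (c : ι → ℝ) {ε : ℝ} (hε : 0 < ε) :
    IsKSos (I : Set (MvPolynomial σ ℝ)) D (C ε + ∑ t ∈ T, c t • v t) := by
  induction T using Finset.cons_induction generalizing ε with
  | empty =>
    rw [Finset.sum_empty, add_zero, ← Real.sq_sqrt hε.le, map_pow]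
    exact (IsKSumSq.sq (by rw [totalDegree_C]; exact D.zero_le)).isKSos
  | cons a T _ ih =>
    rw [Finset.sum_cons, show C ε + (c a • v a + ∑ t ∈ T, c t • v t)
      = (C (ε / 2) + c a • v a) + (C (ε / 2) + ∑ t ∈ T, c t • v t) by
        rw [← add_halves ε, map_add]; ring_nf]
    exact (hv a (T.mem_cons_self a) (c a) _ (half_pos hε)).add
      (ih (fun t ht => hv t (Finset.mem_cons_of_mem ht)) (half_pos hε))

lemma exists_forall_isKSos_C_add [Finite σ] (I : Ideal (MvPolynomial σ ℝ)) (d : ℕ) :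
    ∃ D, ∀ f ∈ realRadical (I : Set (MvPolynomial σ ℝ)), f.totalDegree ≤ d →
      ∀ ε : ℝ, 0 < ε → IsKSos (I : Set (MvPolynomial σ ℝ)) D (C ε + f) := by
  classical
  set S := realRadical (I : Set (MvPolynomial σ ℝ)) ∩ {f | f.totalDegree ≤ d}
  have hfg : (Submodule.span ℝ S).FG := by
    have hle : Submodule.span ℝ S ≤ restrictTotalDegree σ ℝ d :=
      Submodule.span_le.mpr fun f hf => (mem_restrictTotalDegree _ _ _).mpr hf.2
    have := isNoetherian_of_le hle
    exact Module.Finite.iff_fg.mp inferInstance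
  obtain ⟨T, hTS, hspan⟩ := (Submodule.fg_span_iff_fg_span_finset_subset S).mp hfg
  choose! D hD using fun t (ht : t ∈ T) => exists_forall_isKSos_C_add_smul (hTS ht).1 (hTS ht).2
  refine ⟨T.sup D, fun f hf hfd ε hε => ?_⟩
  have hfT : f ∈ Submodule.span ℝ (T : Set (MvPolynomial σ ℝ)) :=
    hspan ▸ Submodule.subset_span ⟨hf, hfd⟩
  obtain ⟨c, -, rfl⟩ := Submodule.mem_span_finset.mp hfT
  exact isKSos_C_add_sum T (fun t ht c ε hε => (hD t ht c ε hε).mono (T.le_sup ht)) c hε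

lemma exists_thetaBody_subset_thetaBody_realRadical [Finite σ] (I : Ideal (MvPolynomial σ ℝ))
    (k : ℕ) : ∃ J, thetaBody (I : Set (MvPolynomial σ ℝ)) J ⊆ thetaBody (realRadical I) k := by
  obtain ⟨D, hD⟩ := exists_forall_isKSos_C_add I (2 * k + 1)
  refine ⟨k + D, fun p hp l hl hlk => le_of_forall_pos_le_add fun ε hε => ?_⟩
  obtain ⟨s, hs, hls⟩ := isKSos_iff.mp hlk
  have hdeg : (l - s).totalDegree ≤ 2 * k + 1 :=
    (totalDegree_sub _ _).trans (max_le (by omega) (hs.totalDegree_le.trans (by omega)))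
  have hsos : IsKSos (I : Set (MvPolynomial σ ℝ)) (k + D) (C ε + l) := by
    convert (hs.isKSos.mono le_self_add).add ((hD _ hls hdeg ε hε).mono le_add_self) using 1
    ring
  have := hp _ ((totalDegree_add _ _).trans (max_le (by simp) hl)) hsos
  rw [map_add, eval_C] at this
  linarith

end RealRadical

/-- An ideal `I ⊆ ℝ[x₁,…,xₙ]` is TH-exact iff its real radical is TH-exact. -/
theorem isThExact_iff_isThExact_realRadical {n : ℕ} (I : Ideal (MvPolynomial (Fin n) ℝ)) :
    IsThExact (I : Set (MvPolynomial (Fin n) ℝ)) ↔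
      IsThExact (realRadical (I : Set (MvPolynomial (Fin n) ℝ))) := by
  constructor
  · rintro ⟨k, hk⟩
    refine ⟨k, subset_antisymm ?_ (closure_convexHull_realVariety_subset_thetaBody _ k)⟩
    rw [realVariety_realRadical, ← hk]
    exact thetaBody_anti (subset_realRadical I) k
  · rintro ⟨k, hk⟩
    obtain ⟨J, hJ⟩ := exists_thetaBody_subset_thetaBody_realRadical I k
    refine ⟨J, subset_antisymm ?_ (closure_convexHull_realVariety_subset_thetaBody _ J)⟩
    rw [← realVariety_realRadical, ← hk]
    exact hJ
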